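/- arXiv:1311.6204 — 4 statements merged into one kernel-verified Lean document; each statement's English description precedes it below -/
import Mathlib

section
/- Let x₁ ≥ … ≥ xₙ > 0 and y₁ ≥ … ≥ yₙ > 0 be real numbers such that for every k ≤ n, x₁⋯x_k ≥ y₁⋯y_k. Then for every k ≤ n, x₁ + … + x_k ≥ y₁ + … + y_k. -/
/-!
With `dᵢ = log (xᵢ / yᵢ)`, the hypothesis says that the partial sums of `d` are nonnegative.
Since the weights `yᵢ` are nonincreasing and nonnegative, summation by parts gives
`0 ≤ ∑ yᵢ dᵢ`, and `yᵢ dᵢ ≤ xᵢ - yᵢ` because `log t ≤ t - 1`.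
-/

open Finset Real

theorem sum_range_mul_nonneg_of_antitoneOn {f d : ℕ → ℝ} {k : ℕ}
    (hf : ∀ i < k, 0 ≤ f i) (hf_anti : AntitoneOn f (Set.Iio k))
    (hd : ∀ j ≤ k, 0 ≤ ∑ i ∈ range j, d i) :
    0 ≤ ∑ i ∈ range k, f i * d i := by
  cases k with
  | zero => simp
  | succ m =>
    have hparts := sum_range_by_parts f d (m + 1)
    simp only [smul_eq_mul, add_tsub_cancel_right] at hparts
    rw [hparts, sub_nonneg]
    calc ∑ i ∈ range m, (f (i + 1) - f i) * ∑ j ∈ range (i + 1), d j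
        ≤ 0 := by
          refine sum_nonpos fun i hi => ?_
          have hi : i < m := mem_range.mp hi
          have hf_step : f (i + 1) ≤ f i :=
            hf_anti (Set.mem_Iio.mpr (by omega)) (Set.mem_Iio.mpr (by omega)) i.le_succ
          exact mul_nonpos_of_nonpos_of_nonneg (sub_nonpos.mpr hf_step) (hd _ (by omega))
      _ ≤ f m * ∑ j ∈ range (m + 1), d j := mul_nonneg (hf m m.lt_succ_self) (hd _ le_rfl)

theorem mul_log_div_le_sub {a b : ℝ} (ha : 0 < a) (hb : 0 < b) : b * log (a / b) ≤ a - b :=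
  calc b * log (a / b) ≤ b * (a / b - 1) :=
        mul_le_mul_of_nonneg_left (log_le_sub_one_of_pos (div_pos ha hb)) hb.le
    _ = a - b := by field_simp

theorem sum_log_div_nonneg_of_prod_le {ι : Type*} {s : Finset ι} {x y : ι → ℝ}
    (hx : ∀ i ∈ s, 0 < x i) (hy : ∀ i ∈ s, 0 < y i) (h : ∏ i ∈ s, y i ≤ ∏ i ∈ s, x i) :
    0 ≤ ∑ i ∈ s, log (x i / y i) := by
  rw [← log_prod fun i hi => (div_pos (hx i hi) (hy i hi)).ne', prod_div_distrib]
  exact log_nonneg <| (one_le_div (prod_pos hy)).mpr h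

theorem partial_sums_of_partial_prods_general (n : ℕ) (x y : ℕ → ℝ)
    (hxpos : ∀ i < n, 0 < x i) (hypos : ∀ i < n, 0 < y i)
    (hymono : ∀ i j, i ≤ j → j < n → y j ≤ y i)
    (hprod : ∀ k ≤ n, ∏ i ∈ Finset.range k, y i ≤ ∏ i ∈ Finset.range k, x i) :
    ∀ k ≤ n, ∑ i ∈ Finset.range k, y i ≤ ∑ i ∈ Finset.range k, x i := by
  intro k hk
  have hlt {j i : ℕ} (hj : j ≤ k) (hi : i ∈ range j) : i < n := by
    have := mem_range.mp hi
    omega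
  have hlog_sums : ∀ j ≤ k, 0 ≤ ∑ i ∈ range j, log (x i / y i) := fun j hj =>
    sum_log_div_nonneg_of_prod_le (fun i hi => hxpos i (hlt hj hi))
      (fun i hi => hypos i (hlt hj hi)) (hprod j (hj.trans hk))
  have hweighted : 0 ≤ ∑ i ∈ range k, y i * log (x i / y i) :=
    sum_range_mul_nonneg_of_antitoneOn (fun i hi => (hypos i (by omega)).le)
      (fun i _ j hj hij => hymono i j hij (by simp only [Set.mem_Iio] at hj; omega)) hlog_sums
  have hpointwise : ∑ i ∈ range k, y i * log (x i / y i) ≤ ∑ i ∈ range k, (x i - y i) :=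
    sum_le_sum fun i hi => mul_log_div_le_sub (hxpos i (hlt le_rfl hi)) (hypos i (hlt le_rfl hi))
  rw [sum_sub_distrib] at hpointwise
  linarith

/-- If two nonincreasing sequences of positive reals satisfy that each partial product of
`x` dominates the corresponding partial product of `y`, then each partial sum of `x`
dominates the corresponding partial sum of `y`. -/
theorem partial_sums_of_partial_prods (n : ℕ) (x y : ℕ → ℝ)
    (hxpos : ∀ i < n, 0 < x i) (hypos : ∀ i < n, 0 < y i)
    (hxmono : ∀ i j, i ≤ j → j < n → x j ≤ x i)
    (hymono : ∀ i j, i ≤ j → j < n → y j ≤ y i)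
    (hprod : ∀ k ≤ n, ∏ i ∈ Finset.range k, y i ≤ ∏ i ∈ Finset.range k, x i) :
    ∀ k ≤ n, ∑ i ∈ Finset.range k, y i ≤ ∑ i ∈ Finset.range k, x i :=
  partial_sums_of_partial_prods_general n x y hxpos hypos hymono hprod
end

section
/- Let M be a real symmetric positive semidefinite n×n matrix with eigenvalues σ₁ ≥ … ≥ σₙ ≥ 0, and let U be an n×k matrix with mutually orthogonal unit columns. Then det(UᵀMU) ≤ σ₁ σ₂ ⋯ σ_k. -/
/-!
Diagonalize `M = V diag(σ) Vᵀ` with `σ` sorted and put `W = VᵀU`, so that `WᵀW = 1`.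
By Cauchy–Binet, `det (Wᵀ diag(σ) W) = ∑_S (∏_{i ∈ S} σᵢ) det (W_S)²` over the `k`-subsets `S`,
and the weights `det (W_S)²` sum to `det (WᵀW) = 1`. Since the `j`-th smallest element of `S` is
at least `j` and `σ` is nonincreasing and nonnegative, every `∏_{i ∈ S} σᵢ` is at most `σ₁ ⋯ σ_k`.
-/

open Matrix

/-- The eigenvalues of a Hermitian matrix listed in nonincreasing order. -/
noncomputable def eigDesc {n : ℕ} {M : Matrix (Fin n) (Fin n) ℝ} (hM : M.IsHermitian) :
    Fin n → ℝ :=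
  fun i => (hM.eigenvalues ∘ Tuple.sort hM.eigenvalues) i.rev

open Finset

theorem Fin.val_le_of_strictMono {k n : ℕ} {f : Fin k → Fin n} (hf : StrictMono f) (i : Fin k) :
    (i : ℕ) ≤ f i := by
  have h := card_le_card_of_injOn f (s := Iic i) (t := Iic (f i))
    (fun _ hx => mem_Iic.2 (hf.monotone (mem_Iic.1 hx))) hf.injective.injOn
  simpa [Fin.card_Iic] using h

theorem Finset.sum_injective_eq_sum_sum_perm {ι M : Type*} [Fintype ι] [LinearOrder ι]
    [AddCommMonoid M] {k : ℕ} (F : (Fin k → ι) → M) :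
    ∑ p : Fin k → ι with Function.Injective p, F p =
      ∑ S : {S : Finset ι // #S = k}, ∑ σ : Equiv.Perm (Fin k), F (S.1.orderEmbOfFin S.2 ∘ σ) := by
  rw [← Fintype.sum_prod_type']
  symm
  refine sum_bij (fun Sσ _ => Sσ.1.1.orderEmbOfFin Sσ.1.2 ∘ Sσ.2) ?_ ?_ ?_ (fun _ _ => rfl)
  · rintro ⟨S, σ⟩ -
    simpa using (S.1.orderEmbOfFin S.2).injective.comp σ.injective
  · rintro ⟨⟨S, hS⟩, σ⟩ - ⟨⟨S', hS'⟩, σ'⟩ - h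
    obtain rfl : S = S' := by
      have hrange := congrArg Set.range h
      simp only [σ.surjective.range_comp, σ'.surjective.range_comp, range_orderEmbOfFin] at hrange
      exact_mod_cast hrange
    obtain rfl : σ = σ' := Equiv.ext fun b => (S.orderEmbOfFin hS).injective (congrFun h b)
    rfl
  · intro p hp
    have hp : Function.Injective p := (mem_filter.1 hp).2
    set S := univ.image p
    have hS : #S = k := by simp [S, card_image_of_injective _ hp]
    let q : Fin k → S := fun b => ⟨p b, mem_image_of_mem p (mem_univ b)⟩
    have hq : Function.Bijective q := by
      rw [Fintype.bijective_iff_injective_and_card]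
      exact ⟨fun a b hab => hp (congrArg Subtype.val hab), by simp [hS]⟩
    refine ⟨(⟨S, hS⟩, (Equiv.ofBijective q hq).trans (S.orderIsoOfFin hS).symm.toEquiv),
      mem_univ _, funext fun b => ?_⟩
    simp [← coe_orderIsoOfFin_apply, q]

namespace Matrix

section CommRing

variable {R ι : Type*} [CommRing R]

theorem det_mul_eq_sum_prod_mul_det_submatrix {m : Type*} [Fintype ι] [Fintype m] [DecidableEq m]
    (A : Matrix m ι R) (B : Matrix ι m R) :
    det (A * B) = ∑ p : m → ι, (∏ i, A i (p i)) * det (B.submatrix p id) := by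
  have hrows : A * B = fun i => ∑ j, A i j • B j := by
    ext i l
    simp [mul_apply, Finset.sum_apply]
  have hexp := (detRowAlternating (n := m) (R := R)).toMultilinearMap.map_sum
    (fun i j => A i j • B j)
  simp only [AlternatingMap.coe_multilinearMap, AlternatingMap.map_smul_univ, smul_eq_mul] at hexp
  rw [hrows]
  exact hexp

theorem det_submatrix_eq_zero_of_not_injective {m : Type*} [Fintype m] [DecidableEq m]
    (B : Matrix ι m R) {p : m → ι} (hp : ¬ Function.Injective p) :
    det (B.submatrix p id) = 0 := by
  obtain ⟨i, j, hpij, hij⟩ := Function.not_injective_iff.1 hp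
  exact det_zero_of_row_eq hij (by ext; simp [hpij])

/-- **Cauchy–Binet formula**. -/
theorem det_mul_eq_sum_det_submatrix_mul_det_submatrix [Fintype ι] [LinearOrder ι] {k : ℕ}
    (A : Matrix (Fin k) ι R) (B : Matrix ι (Fin k) R) :
    det (A * B) = ∑ S : {S : Finset ι // #S = k},
      det (A.submatrix id (S.1.orderEmbOfFin S.2)) *
        det (B.submatrix (S.1.orderEmbOfFin S.2) id) := by
  have hinj : ∑ p : Fin k → ι with Function.Injective p,
      (∏ i, A i (p i)) * det (B.submatrix p id) =
      ∑ p : Fin k → ι, (∏ i, A i (p i)) * det (B.submatrix p id) :=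
    sum_filter_of_ne fun p _ hp => not_not.1 fun hp' => hp <| by
      rw [det_submatrix_eq_zero_of_not_injective B hp', mul_zero]
  rw [det_mul_eq_sum_prod_mul_det_submatrix, ← hinj, sum_injective_eq_sum_sum_perm]
  refine sum_congr rfl fun S _ => ?_
  set e := S.1.orderEmbOfFin S.2
  have hB (σ : Equiv.Perm (Fin k)) :
      det (B.submatrix (e ∘ σ) id) = σ.sign * det (B.submatrix e id) :=
    det_permute σ (B.submatrix e id)
  simp only [hB]
  rw [← det_transpose (A.submatrix id e), det_apply' (A.submatrix id e)ᵀ, sum_mul]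
  refine sum_congr rfl fun σ _ => ?_
  simp only [transpose_apply, submatrix_apply, id_eq, Function.comp_apply]
  ring

theorem det_transpose_mul_diagonal_mul_eq_sum [Fintype ι] [LinearOrder ι] {k : ℕ} (d : ι → R)
    (W : Matrix ι (Fin k) R) :
    det (Wᵀ * diagonal d * W) = ∑ S : {S : Finset ι // #S = k},
      (∏ i, d (S.1.orderEmbOfFin S.2 i)) * det (W.submatrix (S.1.orderEmbOfFin S.2) id) ^ 2 := by
  rw [det_mul_eq_sum_det_submatrix_mul_det_submatrix]
  refine sum_congr rfl fun S _ => ?_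
  set e := S.1.orderEmbOfFin S.2
  have hA : (Wᵀ * diagonal d).submatrix id e = (W.submatrix e id)ᵀ * diagonal (d ∘ e) := by
    ext; simp [mul_diagonal]
  rw [hA, det_mul, det_transpose, det_diagonal]
  simp only [Function.comp_apply]
  ring

theorem mul_diagonal_mul_transpose_submatrix {m ι' : Type*} [Fintype ι] [Fintype ι']
    [DecidableEq ι] [DecidableEq ι'] (V : Matrix m ι R) (d : ι → R) (π : ι' ≃ ι) :
    V.submatrix id π * diagonal (d ∘ π) * (V.submatrix id π)ᵀ = V * diagonal d * Vᵀ := by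
  rw [← submatrix_diagonal_equiv, transpose_submatrix, submatrix_mul_equiv, submatrix_mul_equiv,
    submatrix_id_id]

end CommRing

section Ordered

variable {R : Type*} [CommRing R] [LinearOrder R] [IsStrictOrderedRing R] {n k : ℕ}
  {d : Fin n → R}

theorem det_transpose_mul_diagonal_mul_le (hkn : k ≤ n) (hd : Antitone d) (hd0 : 0 ≤ d)
    {W : Matrix (Fin n) (Fin k) R} (hW : Wᵀ * W = 1) :
    det (Wᵀ * diagonal d * W) ≤ ∏ i : Fin k, d (Fin.castLE hkn i) := by
  have hsum : ∑ S : {S : Finset (Fin n) // #S = k},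
      det (W.submatrix (S.1.orderEmbOfFin S.2) id) ^ 2 = 1 := by
    simpa [hW] using (det_transpose_mul_diagonal_mul_eq_sum 1 W).symm
  rw [det_transpose_mul_diagonal_mul_eq_sum, ← mul_one (∏ i, _), ← hsum, mul_sum]
  refine sum_le_sum fun S _ => mul_le_mul_of_nonneg_right ?_ (sq_nonneg _)
  refine prod_le_prod (fun i _ => hd0 _) fun i _ => hd ?_
  exact Fin.le_def.2 (Fin.val_le_of_strictMono (S.1.orderEmbOfFin S.2).strictMono i)

theorem det_transpose_mul_mul_le_of_eq_mul_diagonal_mul_transpose (hkn : k ≤ n)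
    (hd : Antitone d) (hd0 : 0 ≤ d) {M V : Matrix (Fin n) (Fin n) R} (hV : V * Vᵀ = 1)
    (hM : M = V * diagonal d * Vᵀ) {U : Matrix (Fin n) (Fin k) R} (hU : Uᵀ * U = 1) :
    det (Uᵀ * M * U) ≤ ∏ i : Fin k, d (Fin.castLE hkn i) := by
  have hW : (Vᵀ * U)ᵀ * (Vᵀ * U) = 1 := by
    rw [transpose_mul, transpose_transpose, Matrix.mul_assoc, ← Matrix.mul_assoc V, hV,
      Matrix.one_mul, hU]
  have hconj : Uᵀ * M * U = (Vᵀ * U)ᵀ * diagonal d * (Vᵀ * U) := by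
    rw [hM, transpose_mul, transpose_transpose]
    simp only [Matrix.mul_assoc]
  rw [hconj]
  exact det_transpose_mul_diagonal_mul_le hkn hd hd0 hW

end Ordered

theorem IsHermitian.exists_eq_mul_diagonal_mul_transpose {ι : Type*} [Fintype ι]
    [DecidableEq ι] {A : Matrix ι ι ℝ} (hA : A.IsHermitian) :
    ∃ V : Matrix ι ι ℝ, V * Vᵀ = 1 ∧ A = V * diagonal hA.eigenvalues * Vᵀ := by
  refine ⟨hA.eigenvectorUnitary, ?_, ?_⟩
  · simpa [star_eq_conjTranspose] using Unitary.mul_star_self_of_mem hA.eigenvectorUnitary.2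
  · simpa [Unitary.conjStarAlgAut_apply, star_eq_conjTranspose] using hA.spectral_theorem

end Matrix

theorem antitone_eigDesc {n : ℕ} {M : Matrix (Fin n) (Fin n) ℝ} (hM : M.IsHermitian) :
    Antitone (eigDesc hM) :=
  fun _ _ hij => Tuple.monotone_sort _ (Fin.rev_le_rev.2 hij)

theorem exists_eq_mul_diagonal_eigDesc_mul_transpose {n : ℕ} {M : Matrix (Fin n) (Fin n) ℝ}
    (hM : M.IsHermitian) :
    ∃ V : Matrix (Fin n) (Fin n) ℝ, V * Vᵀ = 1 ∧ M = V * diagonal (eigDesc hM) * Vᵀ := by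
  obtain ⟨V, hV, hMV⟩ := hM.exists_eq_mul_diagonal_mul_transpose
  -- `eigDesc hM = hM.eigenvalues ∘ π` holds definitionally
  let π := Fin.revPerm.trans (Tuple.sort hM.eigenvalues)
  refine ⟨V.submatrix id π, ?_, hMV.trans (mul_diagonal_mul_transpose_submatrix V _ π).symm⟩
  rw [transpose_submatrix, submatrix_mul_equiv, submatrix_id_id, hV]

/-- If `M ⪰ 0` is real symmetric with eigenvalues `σ₁ ≥ … ≥ σₙ ≥ 0` and `U` has
orthonormal columns, then `det (UᵀMU) ≤ σ₁ ⋯ σ_k`. -/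
theorem det_conj_le_prod_eigs {n k : ℕ} (hkn : k ≤ n)
    (M : Matrix (Fin n) (Fin n) ℝ) (hM : M.PosSemidef)
    (U : Matrix (Fin n) (Fin k) ℝ) (hU : Uᵀ * U = 1) :
    (Uᵀ * M * U).det ≤ ∏ i : Fin k, eigDesc hM.1 (Fin.castLE hkn i) := by
  obtain ⟨V, hV, hMV⟩ := exists_eq_mul_diagonal_eigDesc_mul_transpose hM.1
  exact det_transpose_mul_mul_le_of_eq_mul_diagonal_mul_transpose hkn (antitone_eigDesc hM.1)
    (fun _ => hM.eigenvalues_nonneg _) hV hMV hU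
end

section
/- For any m×n real matrix A, and any nonnegative m×m diagonal matrix P with trace 1, the vector discrepancy of A is at least √n · σ_min(P^{1/2} A). -/
open Matrix
open scoped BigOperators

/-- The Euclidean norm of a vector. -/
noncomputable def enorm {ι : Type*} [Fintype ι] (v : ι → ℝ) : ℝ :=
  Real.sqrt (∑ i, (v i) ^ 2)

/-- The least singular value of a matrix: the infimum of `‖Bx‖₂` over unit vectors `x`. -/
noncomputable def smin {ι κ : Type*} [Fintype ι] [Fintype κ] (B : Matrix ι κ ℝ) : ℝ :=
  ⨅ x : {x : κ → ℝ // _root_.enorm x = 1}, _root_.enorm (B.mulVec x)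

/-!
Put `B = P^{1/2} A` and let `x_l = (u_j l)_j` be the columns of the matrix whose rows are
the `u_j`. Since the rows are unit vectors, `∑_l ‖x_l‖² = n`, so `n σ_min(B)² ≤ ∑_l ‖B x_l‖²`.
Exchanging the order of summation, `∑_l ‖B x_l‖² = ∑_i P_ii ‖∑_j A_ij u_j‖²`, a convex
combination of the squared row imbalances, hence at most the square of the largest one.
-/

section EuclideanNorm

variable {ι : Type*} [Fintype ι]

lemma enorm_nonneg (v : ι → ℝ) : 0 ≤ _root_.enorm v :=
  Real.sqrt_nonneg _

lemma enorm_sq (v : ι → ℝ) : _root_.enorm v ^ 2 = ∑ i, v i ^ 2 :=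
  Real.sq_sqrt (Finset.sum_nonneg fun _ _ => sq_nonneg _)

lemma enorm_smul_eq_abs_mul (c : ℝ) (v : ι → ℝ) :
    _root_.enorm (c • v) = |c| * _root_.enorm v := by
  have hsum : ∑ i, (c • v) i ^ 2 = c ^ 2 * ∑ i, v i ^ 2 := by
    simp only [Pi.smul_apply, smul_eq_mul, mul_pow, Finset.mul_sum]
  rw [_root_.enorm, hsum, Real.sqrt_mul (sq_nonneg c), Real.sqrt_sq_eq_abs, _root_.enorm]

lemma sum_enorm_sq_transpose {κ : Type*} [Fintype κ] (u : κ → ι → ℝ) :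
    ∑ l, _root_.enorm (fun j => u j l) ^ 2 = ∑ j, _root_.enorm (u j) ^ 2 := by
  simp only [enorm_sq]
  exact Finset.sum_comm

lemma enorm_sq_diagonal_sqrt_mulVec [DecidableEq ι] {p : ι → ℝ} (hp : ∀ i, 0 ≤ p i)
    (y : ι → ℝ) :
    _root_.enorm (diagonal (fun i => Real.sqrt (p i)) *ᵥ y) ^ 2 = ∑ i, p i * y i ^ 2 := by
  simp only [enorm_sq, mulVec_diagonal, mul_pow, Real.sq_sqrt (hp _)]

end EuclideanNorm

section LeastSingularValue

variable {ι κ : Type*} [Fintype ι] [Fintype κ]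

lemma smin_nonneg (B : Matrix ι κ ℝ) : 0 ≤ smin B := by
  rcases isEmpty_or_nonempty {x : κ → ℝ // _root_.enorm x = 1} with _ | _
  · rw [smin, iInf_of_isEmpty, Real.sInf_empty]
  · exact le_ciInf fun x => enorm_nonneg _

lemma smin_mul_enorm_le (B : Matrix ι κ ℝ) (x : κ → ℝ) :
    smin B * _root_.enorm x ≤ _root_.enorm (B *ᵥ x) := by
  rcases (enorm_nonneg x).eq_or_lt with hx | hx
  · rw [← hx, mul_zero]
    exact enorm_nonneg _
  have hunit : _root_.enorm ((_root_.enorm x)⁻¹ • x) = 1 := by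
    rw [enorm_smul_eq_abs_mul, abs_of_pos (inv_pos.2 hx), inv_mul_cancel₀ hx.ne']
  have hbdd : BddBelow (Set.range fun y : {y : κ → ℝ // _root_.enorm y = 1} =>
      _root_.enorm (B *ᵥ y)) := ⟨0, by rintro _ ⟨y, rfl⟩; exact enorm_nonneg _⟩
  have hle := ciInf_le hbdd ⟨(_root_.enorm x)⁻¹ • x, hunit⟩
  rw [mulVec_smul, enorm_smul_eq_abs_mul, abs_of_pos (inv_pos.2 hx)] at hle
  rwa [← le_div_iff₀ hx, div_eq_inv_mul]

lemma smin_sq_mul_sum_enorm_sq_le {τ : Type*} [Fintype τ] (B : Matrix ι κ ℝ)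
    (x : τ → κ → ℝ) :
    smin B ^ 2 * ∑ l, _root_.enorm (x l) ^ 2 ≤ ∑ l, _root_.enorm (B *ᵥ x l) ^ 2 := by
  rw [Finset.mul_sum]
  refine Finset.sum_le_sum fun l _ => ?_
  rw [← mul_pow]
  exact pow_le_pow_left₀ (mul_nonneg (smin_nonneg B) (enorm_nonneg _)) (smin_mul_enorm_le B _) 2

end LeastSingularValue

lemma sum_mul_le_of_le_of_sum_eq_one {ι : Type*} {s : Finset ι} {p f : ι → ℝ} {c : ℝ}
    (hp : ∀ i ∈ s, 0 ≤ p i) (hsum : ∑ i ∈ s, p i = 1) (hf : ∀ i ∈ s, f i ≤ c) :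
    ∑ i ∈ s, p i * f i ≤ c :=
  calc ∑ i ∈ s, p i * f i ≤ ∑ i ∈ s, p i * c :=
        Finset.sum_le_sum fun i hi => mul_le_mul_of_nonneg_left (hf i hi) (hp i hi)
    _ = c := by rw [← Finset.sum_mul, hsum, one_mul]

theorem vecdisc_ge_spectral_general {m n : ℕ} (A : Matrix (Fin m) (Fin n) ℝ)
    (P : Matrix (Fin m) (Fin m) ℝ)
    (hPnn : ∀ i, 0 ≤ P i i) (hPtr : P.trace = 1)
    (u : Fin n → Fin n → ℝ) (hu : ∀ j, _root_.enorm (u j) = 1) :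
    Real.sqrt n * smin (Matrix.diagonal (fun i => Real.sqrt (P i i)) * A) ≤
      ⨆ i : Fin m, _root_.enorm (fun l => ∑ j, A i j * u j l) := by
  set B := Matrix.diagonal (fun i => Real.sqrt (P i i)) * A
  set v : Fin m → Fin n → ℝ := fun i l => ∑ j, A i j * u j l
  set M := ⨆ i, _root_.enorm (v i)
  have hcols : ∑ l, _root_.enorm (fun j => u j l) ^ 2 = n := by
    simp [sum_enorm_sq_transpose, hu]
  have hrows :
      ∑ l, _root_.enorm (B *ᵥ fun j => u j l) ^ 2 = ∑ i, P i i * _root_.enorm (v i) ^ 2 := by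
    simp only [B, ← mulVec_mulVec, enorm_sq_diagonal_sqrt_mulVec hPnn, enorm_sq, Finset.mul_sum]
    exact Finset.sum_comm
  have hrow_le : ∀ i, _root_.enorm (v i) ^ 2 ≤ M ^ 2 := fun i =>
    pow_le_pow_left₀ (enorm_nonneg _)
      (le_ciSup (Set.finite_range fun i => _root_.enorm (v i)).bddAbove i) 2
  have htr : ∑ i, P i i = 1 := hPtr
  have hsq : (Real.sqrt n * smin B) ^ 2 ≤ M ^ 2 := by
    calc (Real.sqrt n * smin B) ^ 2 = smin B ^ 2 * ∑ l, _root_.enorm (fun j => u j l) ^ 2 := by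
          rw [hcols, mul_pow, Real.sq_sqrt n.cast_nonneg, mul_comm]
      _ ≤ ∑ i, P i i * _root_.enorm (v i) ^ 2 := hrows ▸ smin_sq_mul_sum_enorm_sq_le B _
      _ ≤ M ^ 2 := sum_mul_le_of_le_of_sum_eq_one (fun i _ => hPnn i) htr fun i _ => hrow_le i
  exact (pow_le_pow_iff_left₀ (mul_nonneg (Real.sqrt_nonneg _) (smin_nonneg B))
    (Real.iSup_nonneg fun i => enorm_nonneg _) two_ne_zero).1 hsq

/-- Spectral lower bound on vector discrepancy: for any `m × n` matrix `A` and any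
nonnegative diagonal `P` with trace 1, every assignment of unit vectors `u₁, …, uₙ`
to the columns yields some row imbalance at least `√n · σ_min(P^{1/2} A)`;
i.e. `vecdisc(A) ≥ √n · σ_min(P^{1/2} A)`. -/
theorem vecdisc_ge_spectral {m n : ℕ} (A : Matrix (Fin m) (Fin n) ℝ)
    (P : Matrix (Fin m) (Fin m) ℝ)
    (hPdiag : P.IsDiag) (hPnn : ∀ i, 0 ≤ P i i) (hPtr : P.trace = 1)
    (u : Fin n → Fin n → ℝ) (hu : ∀ j, _root_.enorm (u j) = 1) :
    Real.sqrt n * smin (Matrix.diagonal (fun i => Real.sqrt (P i i)) * A) ≤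
      ⨆ i : Fin m, _root_.enorm (fun l => ∑ j, A i j * u j l) :=
  vecdisc_ge_spectral_general A P hPnn hPtr u hu
end

section
/- Let A be an m×n real matrix whose columns all lie in an ellipsoid E = F B₂^m with F invertible. Then the hereditary vector discrepancy of A is at most ‖E‖_∞ = max_{x∈E} ‖x‖_∞. -/
open Matrix
open scoped BigOperators

/-- The Euclidean norm of a vector. -/
noncomputable def euclidNorm {ι : Type*} [Fintype ι] (v : ι → ℝ) : ℝ :=
  Real.sqrt (∑ i, (v i) ^ 2)

/-!
Write the columns as `A e_j = F v_j` with `‖v_j‖ ≤ 1`, so that `A i j = ⟪v_j, f_i⟫` for the rows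
`f_i` of `F`. Testing `F` against `f_i / ‖f_i‖` shows `‖f_i‖ ≤ ‖E‖_∞`, so it suffices to find unit
vectors `u_j` for which `x ↦ ∑_{j ∈ S} ⟪v_j, x⟫ u_j` is a contraction (the Komlós-type bound
`V X Vᵀ ⪯ I` for the Gram matrix `X` of the `u_j`).

The `u_j` are chosen one at a time, in `ℝⁿ` so that there is always a fresh direction `e`
orthogonal to the previous ones. Given a contraction `P` and a new `v` with `‖v‖ ≤ 1`, solve
`(2 - PᵀP) h = -v` and put `w = P h + √(1 - ‖P h‖²) e`. Then
`‖⟪v, x⟫ w + P x‖² = ‖P x‖² + 4 s² - ⟪P h, P x⟫²` with `s = ⟪h, x⟫ - ⟪P h, P x⟫`, and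
Cauchy–Schwarz for the nonnegative form `‖x‖² - ‖P x‖²`, together with `4 (‖h‖² - ‖P h‖²) ≤ ‖v‖²`,
gives `4 s² ≤ ‖x‖² - ‖P x‖²`.
-/

open Module WithLp
open scoped RealInnerProductSpace

section ContractionExtension

variable {V W : Type*} [NormedAddCommGroup V] [InnerProductSpace ℝ V]
  [NormedAddCommGroup W] [InnerProductSpace ℝ W]

theorem exists_forall_inner_eq_inner_map_sub_two_mul_inner [FiniteDimensional ℝ V]
    [FiniteDimensional ℝ W] (P : V →ₗ[ℝ] W) (hP : ∀ x, ‖P x‖ ≤ ‖x‖) (v : V) :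
    ∃ h : V, ∀ x, ⟪v, x⟫ = ⟪P h, P x⟫ - 2 * ⟪h, x⟫ := by
  set T : V →ₗ[ℝ] V := LinearMap.adjoint P ∘ₗ P - (2 : ℝ) • LinearMap.id
  have hT : ∀ h x, ⟪T h, x⟫ = ⟪P h, P x⟫ - 2 * ⟪h, x⟫ := fun h x => by
    simp [T, inner_sub_left, inner_smul_left, LinearMap.adjoint_inner_left]
  have hT_inj : Function.Injective T := by
    refine (injective_iff_map_eq_zero T).mpr fun h hTh => ?_
    have h0 : ‖P h‖ ^ 2 - 2 * ‖h‖ ^ 2 = 0 := by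
      simpa [hTh, real_inner_self_eq_norm_sq] using (hT h h).symm
    have : ‖h‖ = 0 := by nlinarith [hP h, norm_nonneg (P h), norm_nonneg h]
    exact norm_eq_zero.mp this
  obtain ⟨h, rfl⟩ := LinearMap.injective_iff_surjective.mp hT_inj v
  exact ⟨h, hT h⟩

theorem exists_norm_eq_one_norm_inner_smul_add_le_of_inner_eq (P : V →ₗ[ℝ] W)
    (hP : ∀ x, ‖P x‖ ≤ ‖x‖) {v : V} (hv : ‖v‖ ≤ 1) {h : V}
    (hh : ∀ x, ⟪v, x⟫ = ⟪P h, P x⟫ - 2 * ⟪h, x⟫) {e : W} (he : ‖e‖ = 1)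
    (heP : ∀ x, ⟪P x, e⟫ = 0) :
    ∃ w : W, ‖w‖ = 1 ∧ ∀ x, ‖⟪v, x⟫ • w + P x‖ ≤ ‖x‖ := by
  have hvh : ⟪v, h⟫ = ‖P h‖ ^ 2 - 2 * ‖h‖ ^ 2 := by
    rw [hh, real_inner_self_eq_norm_sq, real_inner_self_eq_norm_sq]
  have hPh := hP h
  have hh_le : ‖h‖ ≤ 1 := by
    have := neg_le_of_abs_le (abs_real_inner_le_norm v h)
    nlinarith [norm_nonneg (P h), norm_nonneg h, norm_nonneg v]
  -- `‖v + 2 • h‖² ≥ 0`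
  have hQh : 4 * (‖h‖ ^ 2 - ‖P h‖ ^ 2) ≤ 1 := by
    have := norm_add_sq_real v ((2 : ℝ) • h)
    rw [real_inner_smul_right, norm_smul, Real.norm_two] at this
    nlinarith [sq_nonneg ‖v + (2 : ℝ) • h‖, pow_le_one₀ (n := 2) (norm_nonneg v) hv]
  set β := √(1 - ‖P h‖ ^ 2)
  have hβ : β ^ 2 = 1 - ‖P h‖ ^ 2 :=
    Real.sq_sqrt (by nlinarith [norm_nonneg (P h), norm_nonneg h])
  have hPhe : ⟪P h, e⟫ = 0 := heP h
  have hw : ‖P h + β • e‖ = 1 := by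
    have : ‖P h + β • e‖ ^ 2 = 1 := by
      rw [norm_add_sq_real, real_inner_smul_right, hPhe, norm_smul, he, Real.norm_eq_abs,
        mul_one, sq_abs, hβ]
      ring
    exact (sq_eq_sq₀ (norm_nonneg _) zero_le_one).mp (by rw [this, one_pow])
  refine ⟨P h + β • e, hw, fun x => ?_⟩
  set g := ⟪P h, P x⟫
  set s := ⟪h, x⟫ - g
  have hvx : ⟪v, x⟫ = -g - 2 * s := by rw [hh x]; ring
  have hwPx : ⟪P h + β • e, P x⟫ = g := by
    rw [inner_add_left, real_inner_smul_left, real_inner_comm (P x) e, heP x, mul_zero, add_zero]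
  -- the form `‖y‖² - ‖P y‖²` is nonnegative at `y = x - 4 s • h`
  have hQx : 4 * s ^ 2 ≤ ‖x‖ ^ 2 - ‖P x‖ ^ 2 := by
    have := pow_le_pow_left₀ (norm_nonneg _) (hP (x - (4 * s) • h)) 2
    simp only [map_sub, map_smul, norm_sub_sq_real, real_inner_smul_right, norm_smul,
      Real.norm_eq_abs, mul_pow, sq_abs, real_inner_comm h, real_inner_comm (P h)] at this
    nlinarith [sq_nonneg s]
  have hsq : ‖⟪v, x⟫ • (P h + β • e) + P x‖ ^ 2 ≤ ‖x‖ ^ 2 := by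
    rw [norm_add_sq_real, real_inner_smul_left, hwPx, norm_smul, hw, Real.norm_eq_abs,
      mul_one, sq_abs, hvx]
    nlinarith [sq_nonneg g]
  exact (sq_le_sq₀ (norm_nonneg _) (norm_nonneg _)).mp hsq

theorem exists_norm_eq_one_mem_orthogonal [FiniteDimensional ℝ W] {K : Submodule ℝ W}
    (hK : finrank ℝ K < finrank ℝ W) : ∃ e ∈ Kᗮ, ‖e‖ = 1 := by
  have hK' : Kᗮ ≠ ⊥ := by
    rw [Ne, Submodule.orthogonal_eq_bot_iff]
    rintro rfl
    exact hK.ne (finrank_top ℝ W)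
  obtain ⟨e, he, he0⟩ := Submodule.exists_mem_ne_zero_of_ne_bot hK'
  exact ⟨‖e‖⁻¹ • e, Kᗮ.smul_mem _ he, norm_smul_inv_norm he0⟩

theorem exists_norm_eq_one_norm_sum_inner_smul_le [FiniteDimensional ℝ V] [FiniteDimensional ℝ W]
    {ι : Type*} (v : ι → V) (hv : ∀ j, ‖v j‖ ≤ 1) (S : Finset ι) (hS : S.card ≤ finrank ℝ W) :
    ∃ u : ι → W, (∀ j ∈ S, ‖u j‖ = 1) ∧ ∀ x, ‖∑ j ∈ S, ⟪v j, x⟫ • u j‖ ≤ ‖x‖ := by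
  classical
  induction S using Finset.induction_on with
  | empty => exact ⟨0, by simp, by simp⟩
  | insert j₀ S hj₀ ih =>
    rw [Finset.card_insert_of_notMem hj₀] at hS
    obtain ⟨u, hu, hPu⟩ := ih (by omega)
    set P : V →ₗ[ℝ] W := ∑ j ∈ S, (innerₗ V (v j)).smulRight (u j)
    have hP : ∀ x, P x = ∑ j ∈ S, ⟪v j, x⟫ • u j := by simp [P]
    set K := Submodule.span ℝ (S.image u : Set W)
    have hK : finrank ℝ K < finrank ℝ W :=
      ((finrank_span_finset_le_card _).trans Finset.card_image_le).trans_lt (by omega)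
    obtain ⟨e, heK, he⟩ := exists_norm_eq_one_mem_orthogonal hK
    have heP : ∀ x, ⟪P x, e⟫ = 0 := by
      refine fun x => Submodule.inner_right_of_mem_orthogonal ?_ heK
      rw [hP]
      exact Submodule.sum_mem _ fun j hj =>
        K.smul_mem _ (Submodule.subset_span (Finset.mem_coe.mpr (Finset.mem_image_of_mem u hj)))
    obtain ⟨h, hh⟩ := exists_forall_inner_eq_inner_map_sub_two_mul_inner P
      (fun x => by rw [hP]; exact hPu x) (v j₀)
    obtain ⟨w, hw, hPw⟩ := exists_norm_eq_one_norm_inner_smul_add_le_of_inner_eq P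
      (fun x => by rw [hP]; exact hPu x) (hv j₀) hh he heP
    have hupdate : ∀ j ∈ S, Function.update u j₀ w j = u j := fun j hj =>
      Function.update_of_ne (ne_of_mem_of_not_mem hj hj₀) _ _
    refine ⟨Function.update u j₀ w, fun j hj => ?_, fun x => ?_⟩
    · rcases Finset.mem_insert.mp hj with rfl | hj
      · rwa [Function.update_self]
      · rw [hupdate j hj]; exact hu j hj
    · rw [Finset.sum_insert hj₀, Function.update_self, Finset.sum_congr rfl fun j hj => by
        rw [hupdate j hj], ← hP]
      exact hPw x

end ContractionExtension

theorem euclidNorm_eq_norm {ι : Type*} [Fintype ι] (v : ι → ℝ) :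
    euclidNorm v = ‖toLp 2 v‖ := by
  simp [euclidNorm, EuclideanSpace.norm_eq]

theorem Matrix.mulVec_apply_eq_inner {ι κ : Type*} [Fintype κ] (F : Matrix ι κ ℝ) (w : κ → ℝ)
    (i : ι) : F.mulVec w i = ⟪toLp 2 (F i), toLp 2 w⟫ := by
  simp [EuclideanSpace.inner_toLp_toLp, Matrix.mulVec, dotProduct_comm]

theorem norm_row_le_sSup_iSup_abs_mulVec {ι κ : Type*} [Fintype ι] [Fintype κ]
    (F : Matrix ι κ ℝ) (i : ι) :
    ‖toLp 2 (F i)‖ ≤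
      sSup {r : ℝ | ∃ w : κ → ℝ, euclidNorm w ≤ 1 ∧ r = ⨆ i' : ι, |F.mulVec w i'|} := by
  set widths := {r : ℝ | ∃ w : κ → ℝ, euclidNorm w ≤ 1 ∧ r = ⨆ i' : ι, |F.mulVec w i'|}
  have hbdd : BddAbove widths := by
    refine ⟨∑ i', ‖toLp 2 (F i')‖, ?_⟩
    rintro r ⟨w, hw, rfl⟩
    refine Real.iSup_le (fun i' => ?_) (by positivity)
    calc |F.mulVec w i'| ≤ ‖toLp 2 (F i')‖ * ‖toLp 2 w‖ := by
          rw [mulVec_apply_eq_inner]; exact abs_real_inner_le_norm _ _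
      _ ≤ ‖toLp 2 (F i')‖ := by
          rw [euclidNorm_eq_norm] at hw
          exact mul_le_of_le_one_right (norm_nonneg _) hw
      _ ≤ ∑ i', ‖toLp 2 (F i')‖ :=
          Finset.single_le_sum (f := fun i' => ‖toLp 2 (F i')‖) (fun _ _ => norm_nonneg _)
            (Finset.mem_univ i')
  set w : κ → ℝ := ‖toLp 2 (F i)‖⁻¹ • F i
  have hw : euclidNorm w ≤ 1 := by
    rw [euclidNorm_eq_norm, toLp_smul, norm_smul, norm_inv, norm_norm]
    exact inv_mul_le_one_of_le₀ le_rfl (norm_nonneg _)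
  have hFw : F.mulVec w i = ‖toLp 2 (F i)‖ := by
    rw [mulVec_apply_eq_inner, toLp_smul, real_inner_smul_right, real_inner_self_eq_norm_sq]
    rcases eq_or_ne ‖toLp 2 (F i)‖ 0 with h0 | h0
    · simp [h0]
    · field_simp
  calc ‖toLp 2 (F i)‖ ≤ |F.mulVec w i| := by rw [hFw]; exact le_abs_self _
    _ ≤ ⨆ i' : ι, |F.mulVec w i'| :=
        le_ciSup (f := fun i' => |F.mulVec w i'|) (Set.finite_range _).bddAbove i
    _ ≤ sSup widths := le_csSup hbdd ⟨w, hw, rfl⟩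

theorem hvecdisc_le_ellipsoid_width_general {m n : ℕ} (A : Matrix (Fin m) (Fin n) ℝ)
    (F : Matrix (Fin m) (Fin m) ℝ)
    (hcols : ∀ j, ∃ u : Fin m → ℝ, euclidNorm u ≤ 1 ∧ (fun i => A i j) = F.mulVec u) :
    ∀ S : Finset (Fin n), ∃ u : Fin n → Fin n → ℝ,
      (∀ j ∈ S, euclidNorm (u j) = 1) ∧
      ∀ i : Fin m, euclidNorm (fun l => ∑ j ∈ S, A i j * u j l) ≤
        sSup {r : ℝ | ∃ w : Fin m → ℝ, euclidNorm w ≤ 1 ∧ r = ⨆ i' : Fin m, |F.mulVec w i'|} := by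
  intro S
  choose v hv hAv using hcols
  obtain ⟨u, hu, hPu⟩ := exists_norm_eq_one_norm_sum_inner_smul_le
    (W := EuclideanSpace ℝ (Fin n)) (fun j => toLp 2 (v j))
    (fun j => by rw [← euclidNorm_eq_norm]; exact hv j) S
    (by simpa using S.card_le_univ)
  refine ⟨fun j => ofLp (u j), fun j hj => by rw [euclidNorm_eq_norm, toLp_ofLp, hu j hj],
    fun i => ?_⟩
  have hA : ∀ j, A i j = ⟪toLp 2 (v j), toLp 2 (F i)⟫ := fun j => by
    rw [real_inner_comm, ← mulVec_apply_eq_inner, ← hAv]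
  have hrow : (fun l => ∑ j ∈ S, A i j * ofLp (u j) l) =
      ofLp (∑ j ∈ S, ⟪toLp 2 (v j), toLp 2 (F i)⟫ • u j) := by
    ext l
    simp [hA]
  rw [hrow, euclidNorm_eq_norm, toLp_ofLp]
  exact (hPu _).trans (norm_row_le_sSup_iSup_abs_mulVec F i)

/-- If all columns of `A` lie in an ellipsoid `E = F B₂^m` with `F` invertible, then the
hereditary vector discrepancy of `A` is at most `‖E‖_∞ = max_{x ∈ E} ‖x‖_∞`: for every subset
`S` of columns there is an assignment of unit vectors to the columns in `S` whose row
imbalances are all at most `‖E‖_∞`. -/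
theorem hvecdisc_le_ellipsoid_width {m n : ℕ} (A : Matrix (Fin m) (Fin n) ℝ)
    (F : Matrix (Fin m) (Fin m) ℝ) (hF : IsUnit F.det)
    (hcols : ∀ j, ∃ u : Fin m → ℝ, euclidNorm u ≤ 1 ∧ (fun i => A i j) = F.mulVec u) :
    ∀ S : Finset (Fin n), ∃ u : Fin n → Fin n → ℝ,
      (∀ j ∈ S, euclidNorm (u j) = 1) ∧
      ∀ i : Fin m, euclidNorm (fun l => ∑ j ∈ S, A i j * u j l) ≤
        sSup {r : ℝ | ∃ w : Fin m → ℝ, euclidNorm w ≤ 1 ∧ r = ⨆ i' : Fin m, |F.mulVec w i'|} :=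
  hvecdisc_le_ellipsoid_width_general A F hcols
end
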